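/- Uniqueness for the Dirichlet problem with distributional boundary value (component form of Corollary 4.3). Let u : D → ℂ be harmonic on the open unit disk D, and suppose that for every 2π-periodic C^∞ function γ : ℝ → ℝ, lim_{r→1⁻} ∫₀^{2π} u(r·e^{iθ})·γ(θ) dθ = 0. Then u is identically zero on D. -/

import Mathlib

open Complex Real Metric Filter

/-- The open unit disk in `ℂ`. -/
noncomputable def unitDisk : Set ℂ := Metric.ball (0 : ℂ) 1

/-- The Laplacian `Δu = ∂²u/∂x² + ∂²u/∂y²` of a function `u : ℂ → ℂ`. -/
noncomputable def laplacian (u : ℂ → ℂ) (z : ℂ) : ℂ :=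
  fderiv ℝ (fun w => (fderiv ℝ u w) 1) z 1 +
    fderiv ℝ (fun w => (fderiv ℝ u w) Complex.I) z Complex.I

/-- `u` is harmonic on the open unit disk: twice continuously real-differentiable with
vanishing Laplacian. -/
def HarmonicOnDisk (u : ℂ → ℂ) : Prop :=
  ContDiffOn ℝ 2 u unitDisk ∧ ∀ z ∈ unitDisk, laplacian u z = 0

section Aux

lemma clm_ext_c {L M : ℂ →L[ℝ] ℂ} (h1 : L 1 = M 1) (hI : L Complex.I = M Complex.I) : L = M := by
  ext z
  have hz : z = (z.re : ℂ) + z.im • Complex.I := by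
    simp [Complex.real_smul, Complex.re_add_im]
  rw [show z = z.re • (1:ℂ) + z.im • Complex.I by
    push_cast [Complex.real_smul, smul_eq_mul] at hz ⊢; rw [mul_one]; exact hz]
  rw [map_add, map_add, map_smul, map_smul, map_smul, map_smul, h1, hI]

lemma hasDerivAt_of_real {f : ℂ → ℂ} {x c : ℂ} {L : ℂ →L[ℝ] ℂ} (hL : HasFDerivAt f L x)
    (h1 : L 1 = c) (hI : L Complex.I = Complex.I * c) : HasDerivAt f c x := by
  rw [hasDerivAt_iff_hasFDerivAt]
  refine hasFDerivAt_of_restrictScalars ℝ hL ?_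
  apply clm_ext_c <;> simp [h1, hI, smul_eq_mul]

/-- The Wirtinger derivative `∂u/∂z`. -/
noncomputable def dzu (u : ℂ → ℂ) (z : ℂ) : ℂ :=
  (2:ℂ)⁻¹ * (fderiv ℝ u z 1 - Complex.I * fderiv ℝ u z Complex.I)

lemma dzu_holo {u : ℂ → ℂ} (hu : HarmonicOnDisk u) : DifferentiableOn ℂ (dzu u) unitDisk := by
  intro z hz
  have hball : unitDisk ∈ nhds z := (isOpen_ball).mem_nhds hz
  have hC : ContDiffAt ℝ 2 u z := hu.1.contDiffAt hball
  have hC1 : ContDiffAt ℝ 1 (fderiv ℝ u) z := hC.fderiv_right (by norm_num)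
  set D := fderiv ℝ (fderiv ℝ u) z with hDdef
  have hD : HasFDerivAt (fderiv ℝ u) D z := (hC1.differentiableAt one_ne_zero).hasFDerivAt
  have hevent : ∀ᶠ y in nhds z, HasFDerivAt u (fderiv ℝ u y) y := by
    filter_upwards [hball] with y hy
    exact ((hu.1.contDiffAt ((isOpen_ball).mem_nhds hy)).differentiableAt
      two_ne_zero).hasFDerivAt
  have hsymm : ∀ v w : ℂ, D v w = D w v := fun v w =>
    second_derivative_symmetric_of_eventually hevent hD v w
  have hA1 : HasFDerivAt (fun w => fderiv ℝ u w 1)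
      ((ContinuousLinearMap.apply ℝ ℂ (1:ℂ)).comp D) z :=
    (ContinuousLinearMap.apply ℝ ℂ (1:ℂ)).hasFDerivAt.comp z hD
  have hAI : HasFDerivAt (fun w => fderiv ℝ u w Complex.I)
      ((ContinuousLinearMap.apply ℝ ℂ (Complex.I)).comp D) z :=
    (ContinuousLinearMap.apply ℝ ℂ (Complex.I)).hasFDerivAt.comp z hD
  have hlap : D 1 1 + D Complex.I Complex.I = 0 := by
    have := hu.2 z hz
    unfold laplacian at this
    rwa [hA1.fderiv, hAI.fderiv] at this
  have hg : HasFDerivAt (dzu u)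
      ((2:ℂ)⁻¹ • (((ContinuousLinearMap.apply ℝ ℂ (1:ℂ)).comp D) -
        Complex.I • ((ContinuousLinearMap.apply ℝ ℂ (Complex.I)).comp D))) z :=
    ((hA1.sub (hAI.const_mul Complex.I)).const_mul ((2:ℂ)⁻¹))
  have hc : HasDerivAt (dzu u) ((2:ℂ)⁻¹ * (D 1 1 - Complex.I * D 1 Complex.I)) z := by
    apply hasDerivAt_of_real hg
    · simp [smul_eq_mul]
    · have h1 : D Complex.I 1 = D 1 Complex.I := hsymm Complex.I 1
      have h2 : D Complex.I Complex.I = -(D 1 1) := by linear_combination hlap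
      simp only [ContinuousLinearMap.smul_apply, ContinuousLinearMap.sub_apply,
        ContinuousLinearMap.comp_apply, ContinuousLinearMap.apply_apply, h1, h2,
        smul_eq_mul]
      linear_combination (2:ℂ)⁻¹ * (D 1) Complex.I * Complex.I_sq
  exact hc.differentiableAt.differentiableWithinAt

lemma memball_ofReal {s : ℝ} (h0 : 0 ≤ s) (h1 : s < 1) : (s:ℂ) ∈ Metric.ball (0:ℂ) 1 := by
  simp only [Metric.mem_ball, Complex.dist_eq, sub_zero, Complex.norm_real, Real.norm_eq_abs]
  rwa [_root_.abs_of_nonneg h0]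

lemma summable_norm_coeff {c : ℕ → ℂ} {Φ : ℂ → ℂ}
    (h : ∀ z ∈ Metric.ball (0:ℂ) 1, HasSum (fun n => c n * z^n) (Φ z))
    {s : ℝ} (h0 : 0 ≤ s) (h1 : s < 1) : Summable (fun n => ‖c n‖ * s^n) := by
  have hs := summable_norm_iff.mpr (h (s:ℂ) (memball_ofReal h0 h1)).summable
  convert hs using 2 with n
  rw [norm_mul, norm_pow, Complex.norm_real, Real.norm_eq_abs, _root_.abs_of_nonneg h0]

/-- The term-by-term primitive of a power series. -/
noncomputable def primF (c : ℕ → ℂ) : ℂ → ℂ := fun z => ∑' n, c n / ((n:ℂ)+1) * z^(n+1)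

/-- Coefficients of the primitive. -/
noncomputable def primCoeff (c : ℕ → ℂ) : ℕ → ℂ
  | 0 => 0
  | (n+1) => c n / ((n:ℂ)+1)

lemma primF_hasSum {c : ℕ → ℂ} {Φ : ℂ → ℂ}
    (h : ∀ z ∈ Metric.ball (0:ℂ) 1, HasSum (fun n => c n * z^n) (Φ z))
    {z : ℂ} (hz : z ∈ Metric.ball (0:ℂ) 1) :
    HasSum (fun n => c n / ((n:ℂ)+1) * z^(n+1)) (primF c z) := by
  apply Summable.hasSum
  refine Summable.of_norm_bounded (g := fun n => ‖z‖ * (‖c n‖ * ‖z‖^n))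
    (((summable_norm_iff.mpr (h z hz).summable).congr ?_).mul_left _) (fun n => ?_)
  · intro n; rw [norm_mul, norm_pow]
  · have h2 : (1:ℝ) ≤ ‖((n:ℂ)+1)‖ := by
      rw [show ((n:ℂ)+1) = ((n+1 : ℕ):ℂ) by push_cast; ring, Complex.norm_natCast]
      exact_mod_cast Nat.one_le_iff_ne_zero.mpr (Nat.succ_ne_zero n)
    calc ‖c n / ((n:ℂ)+1) * z^(n+1)‖ = ‖c n‖/‖((n:ℂ)+1)‖ * (‖z‖^n * ‖z‖) := by
          rw [norm_mul, norm_div, norm_pow, pow_succ]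
      _ ≤ ‖c n‖ * (‖z‖^n * ‖z‖) :=
          mul_le_mul_of_nonneg_right (div_le_self (norm_nonneg _) h2) (by positivity)
      _ = ‖z‖ * (‖c n‖ * ‖z‖^n) := by ring

lemma primF_hasSum' {c : ℕ → ℂ} {Φ : ℂ → ℂ}
    (h : ∀ z ∈ Metric.ball (0:ℂ) 1, HasSum (fun n => c n * z^n) (Φ z))
    {z : ℂ} (hz : z ∈ Metric.ball (0:ℂ) 1) :
    HasSum (fun m => primCoeff c m * z^m) (primF c z) := by
  have h1 := primF_hasSum h hz
  have h2 : HasSum (fun n => (fun m => primCoeff c m * z^m) (n+1)) (primF c z) := by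
    apply h1.congr_fun
    intro n
    simp [primCoeff]
  have h3 := (hasSum_nat_add_iff (f := fun m => primCoeff c m * z^m) 1).mp h2
  simpa [primCoeff] using h3

lemma primF_hasDerivAt {c : ℕ → ℂ} {Φ : ℂ → ℂ}
    (h : ∀ z ∈ Metric.ball (0:ℂ) 1, HasSum (fun n => c n * z^n) (Φ z))
    {z : ℂ} (hz : z ∈ Metric.ball (0:ℂ) 1) : HasDerivAt (primF c) (Φ z) z := by
  rw [mem_ball_zero_iff] at hz
  obtain ⟨s, hs1, hs2⟩ := exists_between hz
  have hs0 : 0 < s := lt_of_le_of_lt (norm_nonneg z) hs1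
  have hterm : ∀ (n : ℕ) (w : ℂ), w ∈ Metric.ball (0:ℂ) s →
      HasDerivAt (fun w => c n / ((n:ℂ)+1) * w^(n+1)) (c n * w^n) w := by
    intro n w _
    have hp := (hasDerivAt_pow (n+1) w).const_mul (c n / ((n:ℂ)+1))
    refine hp.congr_deriv ?_; symm
    have hne : ((n:ℂ)+1) ≠ 0 := Nat.cast_add_one_ne_zero n
    push_cast
    field_simp
  have key := hasDerivAt_tsum_of_isPreconnected
    (summable_norm_coeff h hs0.le hs2) Metric.isOpen_ball
    ((convex_ball (0:ℂ) s).isPreconnected) hterm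
    (fun n w hw => ?_) (mem_ball_self hs0) ?_ (by rwa [mem_ball_zero_iff])
  · rwa [(h z (by rwa [mem_ball_zero_iff])).tsum_eq] at key
  · rw [mem_ball_zero_iff] at hw
    rw [norm_mul, norm_pow]
    gcongr
  · simpa using summable_zero

lemma taylor_hasSum {Φ : ℂ → ℂ} (hΦ : DifferentiableOn ℂ Φ (Metric.ball (0:ℂ) 1)) :
    ∀ z ∈ Metric.ball (0:ℂ) 1,
      HasSum (fun n => ((n.factorial : ℂ)⁻¹ * iteratedDeriv n Φ 0) * z^n) (Φ z) := by
  intro z hz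
  have h := Complex.hasSum_taylorSeries_on_ball hΦ hz
  have he : (fun n : ℕ => ((n.factorial : ℂ)⁻¹ * iteratedDeriv n Φ 0) * z^n)
      = fun n : ℕ => (n.factorial : ℂ)⁻¹ • (z - 0) ^ n • iteratedDeriv n Φ 0 := by
    funext n
    simp [smul_eq_mul]
    ring
  rw [he]
  exact h

lemma H_holo {u : ℂ → ℂ} (hu : HarmonicOnDisk u) {F : ℂ → ℂ}
    (hF : ∀ z ∈ unitDisk, HasDerivAt F (dzu u z) z) :
    DifferentiableOn ℂ (fun z => (starRingEnd ℂ) (u z - F z)) unitDisk := by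
  intro z hz
  have hball : unitDisk ∈ nhds z := Metric.isOpen_ball.mem_nhds hz
  have hu_diff : HasFDerivAt u (fderiv ℝ u z) z :=
    ((hu.1.contDiffAt hball).differentiableAt two_ne_zero).hasFDerivAt
  have hF_real := ((hF z hz).hasFDerivAt).restrictScalars ℝ
  have hsub := hu_diff.sub hF_real
  have hconj : HasFDerivAt (fun w => (starRingEnd ℂ) (u w - F w))
      ((Complex.conjCLE : ℂ ≃L[ℝ] ℂ).toContinuousLinearMap.comp
        (fderiv ℝ u z - (ContinuousLinearMap.smulRight (1 : ℂ →L[ℂ] ℂ)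
          (dzu u z)).restrictScalars ℝ)) z := by
    have := Complex.conjCLE.hasFDerivAt.comp z hsub
    exact this
  set L := fderiv ℝ u z with hL
  have key : L Complex.I - Complex.I * dzu u z = -Complex.I * (L 1 - dzu u z) := by
    simp only [dzu, ← hL]
    linear_combination (L Complex.I) * Complex.I_sq
  refine (hasDerivAt_of_real (c := (starRingEnd ℂ) (L 1 - dzu u z))
    hconj ?_ ?_).differentiableAt.differentiableWithinAt
  · simp [Complex.conjCLE_apply, smul_eq_mul, ← hL]
  · have h0 : ((Complex.conjCLE : ℂ ≃L[ℝ] ℂ).toContinuousLinearMap.comp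
        (L - (ContinuousLinearMap.smulRight (1 : ℂ →L[ℂ] ℂ)
          (dzu u z)).restrictScalars ℝ)) Complex.I
        = (starRingEnd ℂ) (L Complex.I - Complex.I * dzu u z) := by
      simp [Complex.conjCLE_apply, smul_eq_mul]
    rw [h0, key, map_mul]
    simp

lemma int_exp (k : ℤ) : (∫ θ in (0:ℝ)..(2*π), Complex.exp (Complex.I * k * θ)) =
    if k = 0 then (2*π:ℂ) else 0 := by
  rcases eq_or_ne k 0 with h | h
  · simp [h]
  · have hc : Complex.I * k ≠ 0 := by
      simp [Complex.I_ne_zero, Complex.ext_iff]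
      exact_mod_cast h
    rw [if_neg h, integral_exp_mul_complex hc]
    have h1 : Complex.exp (Complex.I * k * ((2*π:ℝ):ℂ)) = 1 := by
      rw [show Complex.I * k * ((2*π:ℝ):ℂ) = k * (2 * π * Complex.I) by push_cast; ring]
      exact Complex.exp_int_mul_two_pi_mul_I k
    push_cast at h1
    simp [h1]

lemma norm_circle_exp (r θ : ℝ) : ‖(r:ℂ) * Complex.exp (Complex.I * θ)‖ = |r| := by
  rw [norm_mul, Complex.norm_exp]
  simp [Complex.mul_re]

lemma series_fourier {A : ℕ → ℂ} {Φ : ℂ → ℂ}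
    (hΦ : ∀ z ∈ Metric.ball (0:ℂ) 1, HasSum (fun m => A m * z ^ m) (Φ z))
    {r : ℝ} (hr0 : 0 < r) (hr1 : r < 1) (j : ℤ) :
    (∫ θ in (0:ℝ)..(2*π),
        Φ ((r:ℂ) * Complex.exp (Complex.I * θ)) * Complex.exp (Complex.I * j * θ))
      = ∑' m : ℕ, (if (m:ℤ) + j = 0 then A m * (r:ℂ)^m * (2*π) else 0) := by
  set f : ℕ → ℝ → ℂ :=
    fun m θ => A m * (r:ℂ)^m * Complex.exp (Complex.I * (((m:ℤ) + j : ℤ):ℂ) * θ) with hf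
  have hmem : ∀ θ : ℝ, (r:ℂ) * Complex.exp (Complex.I * θ) ∈ Metric.ball (0:ℂ) 1 := by
    intro θ
    rw [mem_ball_zero_iff, norm_circle_exp, _root_.abs_of_nonneg hr0.le]
    exact hr1
  have hfeq : ∀ (m : ℕ) (θ : ℝ),
      f m θ = A m * ((r:ℂ) * Complex.exp (Complex.I * θ))^m * Complex.exp (Complex.I * j * θ) := by
    intro m θ
    rw [hf]
    simp only [mul_pow, ← Complex.exp_nat_mul]
    rw [mul_assoc (A m), mul_assoc (A m), mul_assoc ((r:ℂ)^m), ← Complex.exp_add]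
    push_cast
    ring_nf
  have hpt : ∀ θ : ℝ, HasSum (fun m => f m θ)
      (Φ ((r:ℂ) * Complex.exp (Complex.I * θ)) * Complex.exp (Complex.I * j * θ)) := by
    intro θ
    have h2 : (fun m => f m θ) =
        fun m => A m * ((r:ℂ) * Complex.exp (Complex.I * θ))^m * Complex.exp (Complex.I * j * θ) :=
      funext fun m => hfeq m θ
    rw [h2]
    exact (hΦ _ (hmem θ)).mul_right _
  have h2pi : (0:ℝ) ≤ 2*π := by positivity
  have hnorm : ∀ (m : ℕ) (θ : ℝ), ‖f m θ‖ = ‖A m‖ * r^m := by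
    intro m θ
    rw [hf]
    simp only [norm_mul, norm_pow, Complex.norm_real, Complex.norm_exp]
    have h0 : (Complex.I * (((m:ℤ) + j : ℤ):ℂ) * (θ:ℂ)).re = 0 := by
      simp [Complex.mul_re]
    rw [h0]
    simp [Real.norm_eq_abs, _root_.abs_of_nonneg hr0.le]
  have hcont : ∀ m : ℕ, Continuous (f m) := by
    intro m
    apply Continuous.mul continuous_const
    exact Complex.continuous_exp.comp (continuous_const.mul Complex.continuous_ofReal)
  have hint : ∀ m : ℕ, MeasureTheory.Integrable (f m)
      (MeasureTheory.volume.restrict (Set.Ioc (0:ℝ) (2*π))) :=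
    fun m => (hcont m).integrableOn_Ioc
  have hsummable : Summable fun m => ∫ θ in Set.Ioc (0:ℝ) (2*π), ‖f m θ‖ := by
    have he : (fun m => ∫ θ in Set.Ioc (0:ℝ) (2*π), ‖f m θ‖)
        = fun m => (2*π) * (‖A m‖ * r^m) := by
      funext m
      simp only [hnorm]
      rw [MeasureTheory.setIntegral_const]
      simp [Real.volume_Ioc, ENNReal.toReal_ofReal h2pi, Real.pi_nonneg]
    rw [he]
    exact (summable_norm_coeff hΦ hr0.le hr1).mul_left _
  rw [intervalIntegral.integral_of_le h2pi]
  have hswap : ∑' m, (∫ θ in Set.Ioc (0:ℝ) (2*π), f m θ)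
      = ∫ θ in Set.Ioc (0:ℝ) (2*π), (∑' m, f m θ) :=
    MeasureTheory.integral_tsum_of_summable_integral_norm hint hsummable
  have hinteq : ∀ θ : ℝ, Φ ((r:ℂ) * Complex.exp (Complex.I * θ)) * Complex.exp (Complex.I * j * θ)
      = ∑' m, f m θ := fun θ => (hpt θ).tsum_eq.symm
  calc (∫ θ in Set.Ioc (0:ℝ) (2*π),
        Φ ((r:ℂ) * Complex.exp (Complex.I * θ)) * Complex.exp (Complex.I * j * θ))
      = ∫ θ in Set.Ioc (0:ℝ) (2*π), (∑' m, f m θ) := by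
        apply MeasureTheory.setIntegral_congr_fun measurableSet_Ioc
        intro θ _
        exact hinteq θ
    _ = ∑' m, (∫ θ in Set.Ioc (0:ℝ) (2*π), f m θ) := hswap.symm
    _ = ∑' m : ℕ, (if (m:ℤ) + j = 0 then A m * (r:ℂ)^m * (2*π) else 0) := by
        apply tsum_congr
        intro m
        rw [← intervalIntegral.integral_of_le h2pi]
        rw [hf]
        simp only []
        rw [intervalIntegral.integral_const_mul, int_exp ((m:ℤ) + j)]
        split_ifs with hc
        · push_cast
          ring
        · simp

lemma conj_exp_circle (j : ℤ) (θ : ℝ) :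
    (starRingEnd ℂ) (Complex.exp (Complex.I * ((-j : ℤ):ℂ) * θ)) =
      Complex.exp (Complex.I * (j:ℂ) * θ) := by
  rw [← Complex.exp_conj]
  congr 1
  simp only [map_mul, Complex.conj_I, Complex.conj_ofReal, map_intCast]
  push_cast
  ring

lemma continuous_circle (r : ℝ) :
    Continuous (fun θ : ℝ => (r:ℂ) * Complex.exp (Complex.I * θ)) :=
  continuous_const.mul (Complex.continuous_exp.comp
    (continuous_const.mul Complex.continuous_ofReal))

lemma gamma_cos_ok (j : ℤ) : ContDiff ℝ (⊤ : ℕ∞) (fun θ : ℝ => Real.cos (j * θ)) ∧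
    Function.Periodic (fun θ : ℝ => Real.cos (j * θ)) (2 * π) := by
  constructor
  · exact Real.contDiff_cos.comp (contDiff_const.mul contDiff_id)
  · intro x
    simp only [mul_add]
    rw [show (j:ℝ) * (2*π) = (j:ℤ) * (2*π) by norm_num]
    exact Real.cos_add_int_mul_two_pi _ j

lemma gamma_sin_ok (j : ℤ) : ContDiff ℝ (⊤ : ℕ∞) (fun θ : ℝ => Real.sin (j * θ)) ∧
    Function.Periodic (fun θ : ℝ => Real.sin (j * θ)) (2 * π) := by
  constructor
  · exact Real.contDiff_sin.comp (contDiff_const.mul contDiff_id)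
  · intro x
    simp only [mul_add]
    rw [show (j:ℝ) * (2*π) = (j:ℤ) * (2*π) by norm_num]
    exact Real.sin_add_int_mul_two_pi _ j

lemma exp_eq_cos_sin (j : ℤ) (θ : ℝ) : Complex.exp (Complex.I * (j:ℂ) * θ) =
    ((Real.cos (j * θ) : ℝ) : ℂ) + Complex.I * ((Real.sin (j * θ) : ℝ) : ℂ) := by
  rw [show Complex.I * (j:ℂ) * (θ:ℂ) = (((j * θ : ℝ)):ℂ) * Complex.I by push_cast; ring,
    Complex.exp_mul_I, Complex.ofReal_cos, Complex.ofReal_sin]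
  ring

lemma tendsto_circle_integral_exp {u : ℂ → ℂ}
    (hbv : ∀ γ : ℝ → ℝ, ContDiff ℝ (⊤ : ℕ∞) γ → Function.Periodic γ (2 * Real.pi) →
      Tendsto (fun r : ℝ => ∫ θ in (0 : ℝ)..(2 * Real.pi),
          u (r * Complex.exp (Complex.I * θ)) * (γ θ : ℂ))
        (nhdsWithin (1 : ℝ) (Set.Iio 1)) (nhds 0))
    (hcont_u : ContinuousOn u (Metric.ball (0:ℂ) 1)) (j : ℤ) :
    Tendsto (fun r : ℝ => ∫ θ in (0:ℝ)..(2*π),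
        u ((r:ℂ) * Complex.exp (Complex.I * θ)) * Complex.exp (Complex.I * (j:ℂ) * θ))
      (nhdsWithin (1 : ℝ) (Set.Iio 1)) (nhds 0) := by
  have hc := hbv _ (gamma_cos_ok j).1 (gamma_cos_ok j).2
  have hs := hbv _ (gamma_sin_ok j).1 (gamma_sin_ok j).2
  have hcomb := hc.add (hs.const_mul Complex.I)
  simp only [mul_zero, add_zero] at hcomb
  apply Tendsto.congr' ?_ hcomb
  filter_upwards [Ioo_mem_nhdsLT_of_mem (Set.mem_Ioc.mpr ⟨zero_lt_one, le_refl 1⟩)] with r hr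
  have hmem : ∀ θ : ℝ, (r:ℂ) * Complex.exp (Complex.I * θ) ∈ Metric.ball (0:ℂ) 1 := by
    intro θ
    rw [mem_ball_zero_iff, norm_circle_exp, _root_.abs_of_nonneg hr.1.le]
    exact hr.2
  have hucirc : Continuous (fun θ : ℝ => u ((r:ℂ) * Complex.exp (Complex.I * θ))) :=
    hcont_u.comp_continuous (continuous_circle r) hmem
  have hint1 : IntervalIntegrable
      (fun θ : ℝ => u ((r:ℂ) * Complex.exp (Complex.I * θ)) * ((Real.cos (j*θ) : ℝ):ℂ))
      MeasureTheory.volume 0 (2*π) := by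
    apply Continuous.intervalIntegrable
    exact hucirc.mul (Complex.continuous_ofReal.comp (Real.continuous_cos.comp (by continuity)))
  have hint2 : IntervalIntegrable
      (fun θ : ℝ => Complex.I *
        (u ((r:ℂ) * Complex.exp (Complex.I * θ)) * ((Real.sin (j*θ) : ℝ):ℂ)))
      MeasureTheory.volume 0 (2*π) := by
    apply Continuous.intervalIntegrable
    exact continuous_const.mul
      (hucirc.mul (Complex.continuous_ofReal.comp (Real.continuous_sin.comp (by continuity))))
  calc (∫ θ in (0:ℝ)..(2*π), u ((r:ℂ) * Complex.exp (Complex.I * θ)) * ((Real.cos (j*θ):ℝ):ℂ))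
        + Complex.I * (∫ θ in (0:ℝ)..(2*π),
            u ((r:ℂ) * Complex.exp (Complex.I * θ)) * ((Real.sin (j*θ):ℝ):ℂ))
      = ∫ θ in (0:ℝ)..(2*π), (u ((r:ℂ) * Complex.exp (Complex.I * θ)) * ((Real.cos (j*θ):ℝ):ℂ)
          + Complex.I * (u ((r:ℂ) * Complex.exp (Complex.I * θ)) * ((Real.sin (j*θ):ℝ):ℂ))) := by
        rw [intervalIntegral.integral_add hint1 hint2, intervalIntegral.integral_const_mul]
    _ = ∫ θ in (0:ℝ)..(2*π),
          u ((r:ℂ) * Complex.exp (Complex.I * θ)) * Complex.exp (Complex.I * (j:ℂ) * θ) := by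
        apply intervalIntegral.integral_congr
        intro θ _
        simp only []
        rw [exp_eq_cos_sin]
        ring

lemma circle_integral_decomp {u F H : ℂ → ℂ}
    (hcont_u : ContinuousOn u (Metric.ball (0:ℂ) 1))
    (hcontF : ContinuousOn F (Metric.ball (0:ℂ) 1))
    (hcontH : ContinuousOn H (Metric.ball (0:ℂ) 1))
    (hdecomp : ∀ z ∈ Metric.ball (0:ℂ) 1, u z = F z + (starRingEnd ℂ) (H z))
    {A B : ℕ → ℂ}
    (hA : ∀ z ∈ Metric.ball (0:ℂ) 1, HasSum (fun m => A m * z^m) (F z))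
    (hB : ∀ z ∈ Metric.ball (0:ℂ) 1, HasSum (fun m => B m * z^m) (H z))
    {r : ℝ} (hr0 : 0 < r) (hr1 : r < 1) (j : ℤ) :
    (∫ θ in (0:ℝ)..(2*π),
        u ((r:ℂ) * Complex.exp (Complex.I * θ)) * Complex.exp (Complex.I * (j:ℂ) * θ))
      = (∑' m : ℕ, if (m:ℤ) + j = 0 then A m * (r:ℂ)^m * (2*π) else 0)
        + (starRingEnd ℂ) (∑' m : ℕ, if (m:ℤ) + (-j) = 0 then B m * (r:ℂ)^m * (2*π) else 0) := by
  have h2pi : (0:ℝ) ≤ 2*π := by positivity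
  have hmem : ∀ θ : ℝ, (r:ℂ) * Complex.exp (Complex.I * θ) ∈ Metric.ball (0:ℂ) 1 := by
    intro θ
    rw [mem_ball_zero_iff, norm_circle_exp, _root_.abs_of_nonneg hr0.le]
    exact hr1
  have hexpj : Continuous fun θ : ℝ => Complex.exp (Complex.I * (j:ℂ) * θ) :=
    Complex.continuous_exp.comp (continuous_const.mul Complex.continuous_ofReal)
  have hFcirc : Continuous (fun θ : ℝ =>
      F ((r:ℂ) * Complex.exp (Complex.I * θ)) * Complex.exp (Complex.I * (j:ℂ) * θ)) :=
    (hcontF.comp_continuous (continuous_circle r) hmem).mul hexpj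
  have hHcirc : Continuous (fun θ : ℝ =>
      (starRingEnd ℂ) (H ((r:ℂ) * Complex.exp (Complex.I * θ))) *
        Complex.exp (Complex.I * (j:ℂ) * θ)) :=
    (Complex.continuous_conj.comp
      (hcontH.comp_continuous (continuous_circle r) hmem)).mul hexpj
  have step1 : (∫ θ in (0:ℝ)..(2*π),
      u ((r:ℂ) * Complex.exp (Complex.I * θ)) * Complex.exp (Complex.I * (j:ℂ) * θ))
      = (∫ θ in (0:ℝ)..(2*π),
          F ((r:ℂ) * Complex.exp (Complex.I * θ)) * Complex.exp (Complex.I * (j:ℂ) * θ))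
        + ∫ θ in (0:ℝ)..(2*π),
            (starRingEnd ℂ) (H ((r:ℂ) * Complex.exp (Complex.I * θ))) *
              Complex.exp (Complex.I * (j:ℂ) * θ) := by
    rw [← intervalIntegral.integral_add (hFcirc.intervalIntegrable _ _) (hHcirc.intervalIntegrable _ _)]
    apply intervalIntegral.integral_congr
    intro θ _
    simp only []
    rw [hdecomp _ (hmem θ)]
    ring
  have step2 : (∫ θ in (0:ℝ)..(2*π),
      (starRingEnd ℂ) (H ((r:ℂ) * Complex.exp (Complex.I * θ))) *
        Complex.exp (Complex.I * (j:ℂ) * θ))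
      = (starRingEnd ℂ) (∫ θ in (0:ℝ)..(2*π),
          H ((r:ℂ) * Complex.exp (Complex.I * θ)) * Complex.exp (Complex.I * ((-j:ℤ):ℂ) * θ)) := by
    rw [intervalIntegral.integral_of_le h2pi, intervalIntegral.integral_of_le h2pi]
    calc (∫ θ in Set.Ioc (0:ℝ) (2*π),
          (starRingEnd ℂ) (H ((r:ℂ) * Complex.exp (Complex.I * θ))) *
            Complex.exp (Complex.I * (j:ℂ) * θ))
        = ∫ θ in Set.Ioc (0:ℝ) (2*π),
            (starRingEnd ℂ) (H ((r:ℂ) * Complex.exp (Complex.I * θ)) *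
              Complex.exp (Complex.I * ((-j:ℤ):ℂ) * θ)) := by
          apply MeasureTheory.setIntegral_congr_fun measurableSet_Ioc
          intro θ _
          simp only []
          rw [map_mul, conj_exp_circle]
      _ = (starRingEnd ℂ) (∫ θ in Set.Ioc (0:ℝ) (2*π),
            H ((r:ℂ) * Complex.exp (Complex.I * θ)) *
              Complex.exp (Complex.I * ((-j:ℤ):ℂ) * θ)) := integral_conj
  rw [step1, step2, series_fourier hA hr0 hr1 j, series_fourier hB hr0 hr1 (-j)]

end Aux

/-- Uniqueness for the Dirichlet problem with distributional boundary value (component form of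
Corollary 4.3): a harmonic function on the open unit disk with distributional boundary
value `0` is identically zero. -/
theorem dirichlet_distributional_uniqueness (u : ℂ → ℂ) (hu : HarmonicOnDisk u)
    (hbv : ∀ γ : ℝ → ℝ, ContDiff ℝ (⊤ : ℕ∞) γ → Function.Periodic γ (2 * Real.pi) →
      Tendsto (fun r : ℝ => ∫ θ in (0 : ℝ)..(2 * Real.pi),
          u (r * Complex.exp (Complex.I * θ)) * (γ θ : ℂ))
        (nhdsWithin (1 : ℝ) (Set.Iio 1)) (nhds 0)) :
    ∀ z ∈ unitDisk, u z = 0 := by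
  intro z₀ hz₀
  have hz₀' : z₀ ∈ Metric.ball (0:ℂ) 1 := hz₀
  have hg : DifferentiableOn ℂ (dzu u) (Metric.ball (0:ℂ) 1) := dzu_holo hu
  set c : ℕ → ℂ := fun n => (n.factorial:ℂ)⁻¹ * iteratedDeriv n (dzu u) 0 with hc
  have hgsum : ∀ z ∈ Metric.ball (0:ℂ) 1, HasSum (fun n => c n * z^n) (dzu u z) :=
    taylor_hasSum hg
  have hFd : ∀ z ∈ unitDisk, HasDerivAt (primF c) (dzu u z) z :=
    fun z hz => primF_hasDerivAt hgsum hz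
  have hA : ∀ z ∈ Metric.ball (0:ℂ) 1, HasSum (fun m => primCoeff c m * z^m) (primF c z) :=
    fun z hz => primF_hasSum' hgsum hz
  set H : ℂ → ℂ := fun z => (starRingEnd ℂ) (u z - primF c z) with hHdef
  have hHd : DifferentiableOn ℂ H unitDisk := H_holo hu hFd
  set b : ℕ → ℂ := fun n => (n.factorial:ℂ)⁻¹ * iteratedDeriv n H 0 with hb
  have hB : ∀ z ∈ Metric.ball (0:ℂ) 1, HasSum (fun m => b m * z^m) (H z) := taylor_hasSum hHd
  have hdecomp : ∀ z ∈ Metric.ball (0:ℂ) 1, u z = primF c z + (starRingEnd ℂ) (H z) := by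
    intro z hz
    rw [hHdef]
    simp only [Complex.conj_conj]
    ring
  have hcont_u : ContinuousOn u (Metric.ball (0:ℂ) 1) := hu.1.continuousOn
  have hcontF : ContinuousOn (primF c) (Metric.ball (0:ℂ) 1) := fun z hz =>
    ((hFd z hz).continuousAt).continuousWithinAt
  have hcontH : ContinuousOn H (Metric.ball (0:ℂ) 1) := hHd.continuousOn
  have hlim : ∀ j : ℤ, Tendsto (fun r : ℝ =>
      (∑' m : ℕ, if (m:ℤ) + j = 0 then primCoeff c m * (r:ℂ)^m * (2*π) else 0)
        + (starRingEnd ℂ) (∑' m : ℕ, if (m:ℤ) + (-j) = 0 then b m * (r:ℂ)^m * (2*π) else 0))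
      (nhdsWithin 1 (Set.Iio 1)) (nhds 0) := by
    intro j
    refine Tendsto.congr' ?_ (tendsto_circle_integral_exp hbv hcont_u j)
    filter_upwards [Ioo_mem_nhdsLT_of_mem (Set.mem_Ioc.mpr ⟨zero_lt_one, le_refl 1⟩)] with r hr
    exact circle_integral_decomp hcont_u hcontF hcontH hdecomp hA hB hr.1 hr.2 j
  have h2pi_ne : ((2*π:ℝ):ℂ) ≠ 0 := by
    simp [Complex.ofReal_ne_zero, Real.pi_ne_zero]
  have hpow : ∀ k : ℕ, Tendsto (fun r : ℝ => ((r:ℂ))^k) (nhdsWithin (1:ℝ) (Set.Iio 1))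
      (nhds 1) := by
    intro k
    have := ((Complex.continuous_ofReal.pow k).tendsto 1)
    simp at this
    exact this.mono_left nhdsWithin_le_nhds
  -- primCoeff c vanishes
  have hAzero : ∀ n : ℕ, primCoeff c n = 0 := by
    intro n
    match n with
    | 0 => rfl
    | (n+1) =>
      have hfun : (fun r : ℝ =>
          (∑' m : ℕ, if (m:ℤ) + (-(n+1:ℤ)) = 0 then primCoeff c m * (r:ℂ)^m * (2*π) else 0)
            + (starRingEnd ℂ) (∑' m : ℕ,
                if (m:ℤ) + (-(-(n+1:ℤ))) = 0 then b m * (r:ℂ)^m * (2*π) else 0))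
          = fun r : ℝ => primCoeff c (n+1) * ((r:ℂ))^(n+1) * (2*π) := by
        funext r
        have h1 : (∑' m : ℕ, if (m:ℤ) + (-(n+1:ℤ)) = 0
            then primCoeff c m * (r:ℂ)^m * (2*π) else 0)
            = primCoeff c (n+1) * ((r:ℂ))^(n+1) * (2*π) := by
          rw [tsum_eq_single (n+1) (fun m hm => if_neg (by omega))]
          rw [if_pos (by omega)]
        have h2 : (∑' m : ℕ, if (m:ℤ) + (-(-(n+1:ℤ))) = 0
            then b m * (r:ℂ)^m * (2*π) else 0) = 0 := by
          have hz : (fun m : ℕ => if (m:ℤ) + (-(-(n+1:ℤ))) = 0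
              then b m * (r:ℂ)^m * (2*π) else 0) = fun _ => 0 := by
            funext m
            exact if_neg (by omega)
          rw [hz, tsum_zero]
        rw [h1, h2, map_zero, add_zero]
      have hlim2 := hlim (-(n+1:ℤ))
      rw [hfun] at hlim2
      have hlim3 : Tendsto (fun r : ℝ => primCoeff c (n+1) * ((r:ℂ))^(n+1) * (2*π))
          (nhdsWithin (1:ℝ) (Set.Iio 1)) (nhds (primCoeff c (n+1) * 1 * (2*π))) :=
        (((hpow (n+1)).const_mul _).mul_const _)
      have h0 := tendsto_nhds_unique hlim3 hlim2
      rw [mul_one] at h0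
      rcases mul_eq_zero.mp h0 with h3 | h3
      · exact h3
      · exact absurd h3 (by push_cast at h2pi_ne ⊢; exact h2pi_ne)
  have hBzero : ∀ n : ℕ, b n = 0 := by
    intro n
    have hfun : (fun r : ℝ =>
        (∑' m : ℕ, if (m:ℤ) + (n:ℤ) = 0 then primCoeff c m * (r:ℂ)^m * (2*π) else 0)
          + (starRingEnd ℂ) (∑' m : ℕ,
              if (m:ℤ) + (-(n:ℤ)) = 0 then b m * (r:ℂ)^m * (2*π) else 0))
        = fun r : ℝ => (starRingEnd ℂ) (b n * ((r:ℂ))^n * (2*π)) := by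
      funext r
      have h1 : (∑' m : ℕ, if (m:ℤ) + (n:ℤ) = 0
          then primCoeff c m * (r:ℂ)^m * (2*π) else 0) = 0 := by
        have hz : (fun m : ℕ => if (m:ℤ) + (n:ℤ) = 0
            then primCoeff c m * (r:ℂ)^m * (2*π) else 0) = fun _ => 0 := by
          funext m
          split_ifs with hm
          · have hm0 : m = 0 := by omega
            subst hm0
            rw [show primCoeff c 0 = 0 from rfl, zero_mul, zero_mul]
          · rfl
        rw [hz, tsum_zero]
      have h2 : (∑' m : ℕ, if (m:ℤ) + (-(n:ℤ)) = 0
          then b m * (r:ℂ)^m * (2*π) else 0) = b n * ((r:ℂ))^n * (2*π) := by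
        rw [tsum_eq_single n (fun m hm => if_neg (by omega))]
        rw [if_pos (by omega)]
      rw [h1, h2, zero_add]
    have hlim2 := hlim (n:ℤ)
    rw [hfun] at hlim2
    have hbase : Tendsto (fun r : ℝ => b n * ((r:ℂ))^n * (2*π))
        (nhdsWithin (1:ℝ) (Set.Iio 1)) (nhds (b n * 1 * (2*π))) :=
      (((hpow n).const_mul _).mul_const _)
    have hlim3 : Tendsto (fun r : ℝ => (starRingEnd ℂ) (b n * ((r:ℂ))^n * (2*π)))
        (nhdsWithin (1:ℝ) (Set.Iio 1)) (nhds ((starRingEnd ℂ) (b n * 1 * (2*π)))) :=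
      (Complex.continuous_conj.tendsto _).comp hbase
    have h0 := tendsto_nhds_unique hlim3 hlim2
    have h1 : b n * 1 * ((2*π:ℝ):ℂ) = 0 := by
      have h2 := congrArg (starRingEnd ℂ) h0
      simpa [Complex.conj_conj] using h2
    have h3 := mul_eq_zero.mp h1
    rcases h3 with h3 | h3
    · rwa [mul_one] at h3
    · exact absurd h3 (by push_cast at h2pi_ne ⊢; exact h2pi_ne)
  have hF0 : primF c z₀ = 0 := by
    refine (hA z₀ hz₀').unique ?_
    have : (fun m : ℕ => primCoeff c m * z₀^m) = fun _ => 0 := by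
      funext m
      rw [hAzero m, zero_mul]
    rw [this]
    exact hasSum_zero
  have hH0 : H z₀ = 0 := by
    refine (hB z₀ hz₀').unique ?_
    have : (fun m : ℕ => b m * z₀^m) = fun _ => 0 := by
      funext m
      rw [hBzero m, zero_mul]
    rw [this]
    exact hasSum_zero
  rw [hdecomp z₀ hz₀', hF0, hH0, map_zero, add_zero]
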